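/- (Correlation-level content of Theorem 2) Let N ≥ 2, 2 ≤ k ≤ N, and let c : {0,1}^N → ℝ be a correlator function with |S_N^+[c]| > 2^{N−1}. Then there exist y ∈ {0,1}^{N−k} and a sign ε ∈ {+,−} such that |S_{k,y}^ε[c]| > 2^{k−1}, i.e. the k−1 honest parties together with the grouped set of N−k+1 dishonest parties violate the classical bound of a k-partite Svetlichny inequality. -/
import Mathlib


/-- Hamming weight of a bit string. -/
def wt {n : ℕ} (x : Fin n → Fin 2) : ℕ := ∑ i, (x i : ℕ)

/-- The `n`-partite Svetlichny expression `S_n^+` of a correlator function. -/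
def Splus {n : ℕ} (c : (Fin n → Fin 2) → ℝ) : ℝ :=
  ∑ x : Fin n → Fin 2, (-1 : ℝ) ^ (wt x * (wt x + 1) / 2) * c x

/-- The `n`-partite Svetlichny expression `S_n^-` of a correlator function. -/
def Sminus {n : ℕ} (c : (Fin n → Fin 2) → ℝ) : ℝ :=
  ∑ x : Fin n → Fin 2, (-1 : ℝ) ^ (wt x * (wt x - 1) / 2) * c x

/-- The restricted `k`-partite Svetlichny expression `S_{k,y}^+`, where the inputs of the
last `m` (grouped) coordinates are fixed to `y`. -/
def SplusRes {k m : ℕ} (c : (Fin (k + m) → Fin 2) → ℝ) (y : Fin m → Fin 2) : ℝ :=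
  ∑ z : Fin k → Fin 2, (-1 : ℝ) ^ (wt z * (wt z + 1) / 2) * c (Fin.append z y)

/-- The restricted `k`-partite Svetlichny expression `S_{k,y}^-`. -/
def SminusRes {k m : ℕ} (c : (Fin (k + m) → Fin 2) → ℝ) (y : Fin m → Fin 2) : ℝ :=
  ∑ z : Fin k → Fin 2, (-1 : ℝ) ^ (wt z * (wt z - 1) / 2) * c (Fin.append z y)


lemma wt_append {k m : ℕ} (z : Fin k → Fin 2) (y : Fin m → Fin 2) :
    wt (Fin.append z y) = wt z + wt y := by
  unfold wt
  rw [Fin.sum_univ_add]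
  simp [Fin.append_left, Fin.append_right]

lemma tri_add (a b : ℕ) : (a+b)*((a+b)+1)/2 = a*(a+1)/2 + b*(b+1)/2 + a*b := by
  obtain ⟨p, hp⟩ := Nat.even_mul_succ_self a
  obtain ⟨q, hq⟩ := Nat.even_mul_succ_self b
  have key : (a+b)*((a+b)+1) = a*(a+1) + b*(b+1) + 2*(a*b) := by ring
  omega

lemma tri_sub (a : ℕ) : a*(a+1)/2 = a*(a-1)/2 + a := by
  obtain ⟨p, hp⟩ := Nat.even_mul_succ_self a
  have key : a*(a+1) = a*(a-1) + 2*a := by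
    cases a with
    | zero => rfl
    | succ n => simp [Nat.succ_sub_one]; ring
  omega

lemma sign_split (a b : ℕ) :
    (-1:ℝ)^((a+b)*((a+b)+1)/2) =
      (-1:ℝ)^(b*(b+1)/2) *
        (if Even b then (-1:ℝ)^(a*(a+1)/2) else (-1:ℝ)^(a*(a-1)/2)) := by
  rw [tri_add]
  by_cases hb : Even b
  · rw [if_pos hb, pow_add, pow_add, (hb.mul_left a).neg_one_pow]
    ring
  · rw [if_neg hb]
    have hodd : Odd b := Nat.odd_iff.mpr (Nat.not_even_iff.mp hb)
    have h1 : a*(b+1) = a*b + a := by ring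
    have h2 : a*(a+1)/2 + b*(b+1)/2 + a*b
        = (a*(a-1)/2 + b*(b+1)/2) + a*(b+1) := by
      have := tri_sub a; omega
    have heven : Even (a*(b+1)) := (hodd.add_one).mul_left a
    rw [h2, pow_add, heven.neg_one_pow, pow_add]
    ring

lemma splus_decomp (k m : ℕ) (c : (Fin (k + m) → Fin 2) → ℝ) :
    Splus c = ∑ y : Fin m → Fin 2, (-1:ℝ)^(wt y * (wt y + 1) / 2) *
      (if Even (wt y) then SplusRes c y else SminusRes c y) := by
  unfold Splus
  rw [← Equiv.sum_comp (Fin.appendEquiv k m)]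
  rw [Fintype.sum_prod_type, Finset.sum_comm]
  refine Finset.sum_congr rfl fun y _ => ?_
  simp only [Fin.appendEquiv, Equiv.coe_fn_mk]
  by_cases hy : Even (wt y)
  · rw [if_pos hy]
    unfold SplusRes
    rw [Finset.mul_sum]
    refine Finset.sum_congr rfl fun z _ => ?_
    rw [wt_append, sign_split (wt z) (wt y), if_pos hy]
    ring
  · rw [if_neg hy]
    unfold SminusRes
    rw [Finset.mul_sum]
    refine Finset.sum_congr rfl fun z _ => ?_
    rw [wt_append, sign_split (wt z) (wt y), if_neg hy]
    ring


/-- Correlation-level content of Theorem 2: a violation of the `N`-partite Svetlichny bound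
(`N = k + m`) implies that some restricted `k`-partite Svetlichny expression violates the
classical bound `2^{k-1}`. -/
theorem stmt_5 (k m : ℕ) (hk : 2 ≤ k) (c : (Fin (k + m) → Fin 2) → ℝ)
    (hviol : |Splus c| > 2 ^ (k + m - 1)) :
    ∃ y : Fin m → Fin 2,
      |SminusRes c y| > 2 ^ (k - 1) ∨ |SplusRes c y| > 2 ^ (k - 1) := by
  by_contra hcon
  push_neg at hcon
  have hbound : |Splus c| ≤ 2 ^ (k + m - 1) := by
    rw [splus_decomp k m c]
    calc |∑ y : Fin m → Fin 2, (-1:ℝ)^(wt y * (wt y + 1) / 2) *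
          (if Even (wt y) then SplusRes c y else SminusRes c y)|
        ≤ ∑ y : Fin m → Fin 2, |(-1:ℝ)^(wt y * (wt y + 1) / 2) *
          (if Even (wt y) then SplusRes c y else SminusRes c y)| :=
          Finset.abs_sum_le_sum_abs _ _
      _ ≤ ∑ _y : Fin m → Fin 2, (2:ℝ) ^ (k - 1) := by
          refine Finset.sum_le_sum fun y _ => ?_
          rw [abs_mul, abs_pow, abs_neg, abs_one, one_pow, one_mul]
          obtain ⟨h1, h2⟩ := hcon y
          by_cases hy : Even (wt y)
          · rw [if_pos hy]; exact h2
          · rw [if_neg hy]; exact h1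
      _ = 2 ^ m * 2 ^ (k - 1) := by
          rw [Finset.sum_const]
          simp [Fintype.card_fun, mul_comm]
      _ = 2 ^ (k + m - 1) := by
          rw [← pow_add]
          congr 1
          omega
  linarith
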